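/- For any positive semidefinite block matrix [[A, X],[X*, B]] in M_{2n} with n×n blocks, the smallest eigenvalue satisfies λ_{2n}↑([[A, X],[X*, B]]) ≥ 0 and λ_{2n−1}([[A, X],[X*, B]]) ≤ λ_n(A) + λ_n(B) ≤ λ_n(A + B), where λ_k denotes eigenvalues in decreasing order. -/

import Mathlib

open scoped Matrix ComplexOrder

noncomputable section

/-- The numerical range of a matrix. -/
def numRange {m : Type*} [Fintype m] (X : Matrix m m ℂ) : Set ℂ :=
  {z | ∃ v : m → ℂ, star v ⬝ᵥ v = 1 ∧ z = star v ⬝ᵥ X.mulVec v}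

/-- The inradius of a subset of the plane: the radius of the largest disc it contains. -/
def inRad (S : Set ℂ) : ℝ := sSup {r : ℝ | ∃ c : ℂ, Metric.closedBall c r ⊆ S}

/-- The indiameter: the diameter of the largest disc contained in the set. -/
def inDiam (S : Set ℂ) : ℝ := 2 * inRad S

/-- The numerical range of the compression of `X` to the subspace `S`. -/
def nrOn {m : Type*} [Fintype m] (X : Matrix m m ℂ) (S : Submodule ℂ (m → ℂ)) : Set ℂ :=
  {z | ∃ v ∈ S, star v ⬝ᵥ v = 1 ∧ z = star v ⬝ᵥ X.mulVec v}

/-- The elliptical width `δ₂(X)`: the supremum of the indiameters of the numerical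
ranges of compressions of `X` to two-dimensional subspaces. -/
def ellWidth {m : Type*} [Fintype m] (X : Matrix m m ℂ) : ℝ :=
  sSup {d | ∃ S : Submodule ℂ (m → ℂ), Module.finrank ℂ S = 2 ∧ d = inDiam (nrOn X S)}

/-- The operator (spectral) norm of a matrix. -/
def opNorm {m : Type*} [Fintype m] [DecidableEq m] (M : Matrix m m ℂ) : ℝ :=
  ‖Matrix.toEuclideanCLM (𝕜 := ℂ) M‖

/-- The Frobenius (Hilbert–Schmidt) norm of a matrix. -/
def frobNorm {m : Type*} [Fintype m] (M : Matrix m m ℂ) : ℝ :=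
  Real.sqrt ((Matrix.trace (Mᴴ * M)).re)

/-- Eigenvalues of a Hermitian matrix in decreasing order (junk value `0` otherwise):
`eigDesc M k` is the `(k+1)`-th largest eigenvalue of `M`. -/
def eigDesc {m : ℕ} (M : Matrix (Fin m) (Fin m) ℂ) (k : Fin m) : ℝ :=
  if h : M.IsHermitian then (h.eigenvalues ∘ Tuple.sort h.eigenvalues) k.rev else 0

/-- The absolute value `|X| = (XᴴX)^(1/2)` of a matrix. -/
def matAbs {m : Type*} [Fintype m] [DecidableEq m] (X : Matrix m m ℂ) : Matrix m m ℂ :=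
  (Matrix.posSemidef_conjTranspose_mul_self X).1.eigenvectorUnitary.1 *
    Matrix.diagonal ((↑) ∘ Real.sqrt ∘ (Matrix.posSemidef_conjTranspose_mul_self X).1.eigenvalues) *
    (star (Matrix.posSemidef_conjTranspose_mul_self X).1.eigenvectorUnitary : Matrix m m ℂ)

/-- The `2n × 2n` block matrix `[[A, X],[Xᴴ, B]]`, reindexed by `Fin (n+n)`. -/
def blockR {n : ℕ} (A X B : Matrix (Fin n) (Fin n) ℂ) :
    Matrix (Fin (n + n)) (Fin (n + n)) ℂ :=
  (Matrix.fromBlocks A X Xᴴ B).submatrix finSumFinEquiv.symm finSumFinEquiv.symm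

/-- The operator norm distance from `X` to the scalar matrices. -/
def distScalar {m : Type*} [Fintype m] [DecidableEq m] (X : Matrix m m ℂ) : ℝ :=
  ⨅ a : ℂ, opNorm (X - a • 1)

/-- Apply a real function to a Hermitian matrix by the functional calculus
(junk value `0` if the matrix is not Hermitian). -/
def hermApply {m : Type*} [Fintype m] [DecidableEq m] (f : ℝ → ℝ) (M : Matrix m m ℂ) :
    Matrix m m ℂ :=
  if h : M.IsHermitian then h.cfc f else 0

end

/-!
Let `u`, `v` be unit eigenvectors of `A`, `B` for their smallest eigenvalues `a`, `b`. The
compression of `M = [[A, X], [Xᴴ, B]]` to the plane spanned by `(u, 0)` and `(0, v)` is a positive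
semidefinite `2 × 2` matrix of trace `a + b`, so on that plane the quadratic form of `M` is at most
`(a + b) ‖z‖²`. The plane contains a nonzero vector orthogonal to a bottom eigenvector of `M`, on
which the form of `M` is at least `λ_{2n-1}(M) ‖z‖²`. The inequality `λ_n(A) + λ_n(B) ≤ λ_n(A + B)`
is the Rayleigh bound for `A` and `B` at a bottom eigenvector of `A + B`.
-/

open Matrix

section spectralExpansion

variable {𝕜 : Type*} [RCLike 𝕜] {n : Type*} [Fintype n]

theorem OrthonormalBasis.star_dotProduct_eq_sum
    (b : OrthonormalBasis n 𝕜 (EuclideanSpace 𝕜 n)) (x y : n → 𝕜) :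
    star x ⬝ᵥ y = ∑ i, star (star ⇑(b i) ⬝ᵥ x) * (star ⇑(b i) ⬝ᵥ y) := by
  have h := b.sum_inner_mul_inner (WithLp.toLp 2 x) (WithLp.toLp 2 y)
  rw [EuclideanSpace.inner_eq_star_dotProduct, dotProduct_comm] at h
  rw [← h]
  refine Finset.sum_congr rfl fun i _ => ?_
  rw [← inner_conj_symm, EuclideanSpace.inner_eq_star_dotProduct,
    EuclideanSpace.inner_eq_star_dotProduct, dotProduct_comm (WithLp.ofLp (WithLp.toLp 2 x)),
    dotProduct_comm (WithLp.ofLp (WithLp.toLp 2 y))]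
  rfl

theorem OrthonormalBasis.re_star_dotProduct_self
    (b : OrthonormalBasis n 𝕜 (EuclideanSpace 𝕜 n)) (x : n → 𝕜) :
    RCLike.re (star x ⬝ᵥ x) = ∑ i, ‖star ⇑(b i) ⬝ᵥ x‖ ^ 2 := by
  simp only [b.star_dotProduct_eq_sum x x, RCLike.star_def, RCLike.conj_mul, map_sum]
  norm_cast

variable [DecidableEq n]

theorem Matrix.IsHermitian.re_star_dotProduct_mulVec {M : Matrix n n 𝕜} (hM : M.IsHermitian)
    (x : n → 𝕜) : RCLike.re (star x ⬝ᵥ M *ᵥ x) =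
      ∑ i, hM.eigenvalues i * ‖star ⇑(hM.eigenvectorBasis i) ⬝ᵥ x‖ ^ 2 := by
  set b := hM.eigenvectorBasis
  have hb (i : n) : star ⇑(b i) ⬝ᵥ M *ᵥ x = hM.eigenvalues i * (star ⇑(b i) ⬝ᵥ x) := by
    have : star ⇑(b i) ᵥ* M = star (M *ᵥ ⇑(b i)) := by rw [star_mulVec, hM.eq]
    rw [dotProduct_mulVec, this, hM.mulVec_eigenvectorBasis, star_smul, smul_dotProduct,
      RCLike.real_smul_eq_coe_mul, star_trivial]
  simp only [b.star_dotProduct_eq_sum x, hb, RCLike.star_def, map_sum]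
  refine Finset.sum_congr rfl fun i _ => ?_
  rw [mul_left_comm, RCLike.conj_mul]
  norm_cast

theorem Matrix.IsHermitian.mul_re_star_dotProduct_le {M : Matrix n n 𝕜} (hM : M.IsHermitian)
    (x : n → 𝕜) {t : ℝ}
    (ht : ∀ i, star ⇑(hM.eigenvectorBasis i) ⬝ᵥ x ≠ 0 → t ≤ hM.eigenvalues i) :
    t * RCLike.re (star x ⬝ᵥ x) ≤ RCLike.re (star x ⬝ᵥ M *ᵥ x) := by
  rw [hM.re_star_dotProduct_mulVec, hM.eigenvectorBasis.re_star_dotProduct_self, Finset.mul_sum]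
  refine Finset.sum_le_sum fun i _ => ?_
  by_cases hi : star ⇑(hM.eigenvectorBasis i) ⬝ᵥ x = 0
  · simp [hi]
  · exact mul_le_mul_of_nonneg_right (ht i hi) (sq_nonneg _)

theorem Matrix.PosSemidef.re_star_dotProduct_mulVec_le_trace {M : Matrix n n 𝕜}
    (hM : M.PosSemidef) (x : n → 𝕜) :
    RCLike.re (star x ⬝ᵥ M *ᵥ x) ≤ RCLike.re M.trace * RCLike.re (star x ⬝ᵥ x) := by
  rw [hM.1.re_star_dotProduct_mulVec, hM.1.eigenvectorBasis.re_star_dotProduct_self,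
    hM.1.trace_eq_sum_eigenvalues, ← RCLike.ofReal_sum, RCLike.ofReal_re, Finset.mul_sum]
  refine Finset.sum_le_sum fun i _ => mul_le_mul_of_nonneg_right ?_ (sq_nonneg _)
  exact Finset.single_le_sum (fun j _ => hM.eigenvalues_nonneg j) (Finset.mem_univ i)

end spectralExpansion

theorem Matrix.exists_ne_zero_dotProduct_eq_zero {K κ : Type*} [Field K] [Fintype κ]
    [DecidableEq κ] (f : κ → K) (hκ : 1 < Fintype.card κ) : ∃ z ≠ 0, f ⬝ᵥ z = 0 := by
  have hker : LinearMap.ker (dotProductEquiv K κ f) ≠ ⊥ :=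
    LinearMap.ker_ne_bot_of_finrank_lt (by simpa using hκ)
  obtain ⟨z, hz, hz0⟩ := Submodule.exists_mem_ne_zero_of_ne_bot hker
  exact ⟨z, hz0, hz⟩

theorem Tuple.apply_sort_le_of_le {m : ℕ} {α : Type*} [LinearOrder α] (g : Fin m → α)
    {k i : Fin m} (h : k ≤ (Tuple.sort g).symm i) : g (Tuple.sort g k) ≤ g i := by
  simpa using Tuple.monotone_sort g h

section blockColumns

variable {𝕜 : Type*} [RCLike 𝕜] {ι ι' : Type*} [Fintype ι] [Fintype ι']

def Matrix.blockColumns (u : ι → 𝕜) (v : ι' → 𝕜) : Matrix (ι ⊕ ι') (Unit ⊕ Unit) 𝕜 :=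
  Matrix.fromBlocks (replicateCol Unit u) 0 0 (replicateCol Unit v)

theorem Matrix.blockColumns_conjTranspose_mul_self {u : ι → 𝕜} {v : ι' → 𝕜}
    (hu : star u ⬝ᵥ u = 1) (hv : star v ⬝ᵥ v = 1) :
    (blockColumns u v)ᴴ * blockColumns u v = 1 := by
  simp only [blockColumns, fromBlocks_conjTranspose, fromBlocks_multiply,
    conjTranspose_replicateCol, conjTranspose_zero, Matrix.mul_zero, Matrix.zero_mul, add_zero,
    zero_add, replicateRow_mul_replicateCol, hu, hv, ← fromBlocks_one]
  rfl

theorem Matrix.trace_blockColumns_conjTranspose_mul_fromBlocks_mul (u : ι → 𝕜) (v : ι' → 𝕜)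
    (A : Matrix ι ι 𝕜) (X : Matrix ι ι' 𝕜) (Y : Matrix ι' ι 𝕜) (B : Matrix ι' ι' 𝕜) :
    ((blockColumns u v)ᴴ * fromBlocks A X Y B * blockColumns u v).trace =
      star u ⬝ᵥ A *ᵥ u + star v ⬝ᵥ B *ᵥ v := by
  simp [blockColumns, fromBlocks_conjTranspose, fromBlocks_multiply, Matrix.trace,
    ← replicateCol_mulVec, ← mulVec_mulVec, replicateRow_mulVec_eq_const]

end blockColumns

section eigDesc

variable {m : ℕ} {M : Matrix (Fin m) (Fin m) ℂ}

theorem Matrix.IsHermitian.eigDesc_eq (hM : M.IsHermitian) (k : Fin m) :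
    eigDesc M k = hM.eigenvalues (Tuple.sort hM.eigenvalues k.rev) := by
  rw [eigDesc, dif_pos hM]
  rfl

theorem Matrix.PosSemidef.eigDesc_nonneg (hM : M.PosSemidef) (k : Fin m) : 0 ≤ eigDesc M k := by
  rw [hM.1.eigDesc_eq]
  exact hM.eigenvalues_nonneg _

theorem Matrix.IsHermitian.exists_eigDesc_last (hM : M.IsHermitian) (hm : 0 < m) :
    ∃ u : Fin m → ℂ, star u ⬝ᵥ u = 1 ∧
      star u ⬝ᵥ M *ᵥ u = eigDesc M ⟨m - 1, Nat.sub_lt hm Nat.one_pos⟩ := by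
  set i := Tuple.sort hM.eigenvalues ⟨0, hm⟩
  have hu : star ⇑(hM.eigenvectorBasis i) ⬝ᵥ ⇑(hM.eigenvectorBasis i) = 1 := by
    rw [dotProduct_comm, ← EuclideanSpace.inner_eq_star_dotProduct, OrthonormalBasis.inner_eq_one]
  have hrev : (⟨m - 1, Nat.sub_lt hm Nat.one_pos⟩ : Fin m).rev = ⟨0, hm⟩ := by
    ext; simp; omega
  refine ⟨hM.eigenvectorBasis i, hu, ?_⟩
  rw [hM.mulVec_eigenvectorBasis, dotProduct_smul, hu, hM.eigDesc_eq, hrev, Complex.real_smul,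
    mul_one]

theorem Matrix.IsHermitian.eigDesc_last_mul_le (hM : M.IsHermitian) (hm : 0 < m)
    (x : Fin m → ℂ) :
    eigDesc M ⟨m - 1, Nat.sub_lt hm Nat.one_pos⟩ * (star x ⬝ᵥ x).re ≤
      (star x ⬝ᵥ M *ᵥ x).re := by
  have hrev : (⟨m - 1, Nat.sub_lt hm Nat.one_pos⟩ : Fin m).rev = ⟨0, hm⟩ := by
    ext; simp; omega
  rw [hM.eigDesc_eq, hrev]
  exact hM.mul_re_star_dotProduct_le x fun i _ =>
    Tuple.apply_sort_le_of_le _ (Nat.zero_le _)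

theorem Matrix.IsHermitian.exists_forall_orthogonal_eigDesc_mul_le (hM : M.IsHermitian)
    (hm : 1 < m) : ∃ w : Fin m → ℂ, ∀ x, star w ⬝ᵥ x = 0 →
      eigDesc M ⟨m - 2, by omega⟩ * (star x ⬝ᵥ x).re ≤ (star x ⬝ᵥ M *ᵥ x).re := by
  have hrev : (⟨m - 2, by omega⟩ : Fin m).rev = ⟨1, hm⟩ := by ext; simp; omega
  set i₀ := Tuple.sort hM.eigenvalues ⟨0, by omega⟩
  refine ⟨hM.eigenvectorBasis i₀, fun x hx => ?_⟩
  rw [hM.eigDesc_eq, hrev]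
  refine hM.mul_re_star_dotProduct_le x fun i hi => Tuple.apply_sort_le_of_le _ ?_
  have hi₀ : (Tuple.sort hM.eigenvalues).symm i ≠ ⟨0, by omega⟩ := by
    rintro h
    rw [Equiv.symm_apply_eq] at h
    exact hi (h ▸ hx)
  rw [Fin.le_def]
  have := Fin.val_ne_of_ne hi₀
  simp only at this ⊢
  omega

theorem Matrix.PosSemidef.eigDesc_sub_two_le_re_trace (hM : M.PosSemidef) (hm : 1 < m)
    {κ : Type*} [Fintype κ] [DecidableEq κ] (hκ : 1 < Fintype.card κ)
    (W : Matrix (Fin m) κ ℂ) (hW : Wᴴ * W = 1) :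
    eigDesc M ⟨m - 2, by omega⟩ ≤ (Wᴴ * M * W).trace.re := by
  obtain ⟨w, hw⟩ := hM.1.exists_forall_orthogonal_eigDesc_mul_le hm
  obtain ⟨z, hz0, hz⟩ := exists_ne_zero_dotProduct_eq_zero (star w ᵥ* W) hκ
  have hWz : star w ⬝ᵥ W *ᵥ z = 0 := by rwa [dotProduct_mulVec]
  have hnorm : star (W *ᵥ z) ⬝ᵥ W *ᵥ z = star z ⬝ᵥ z := by
    rw [star_mulVec, ← dotProduct_mulVec, mulVec_mulVec, hW, one_mulVec]
  have hquad : star (W *ᵥ z) ⬝ᵥ M *ᵥ W *ᵥ z = star z ⬝ᵥ (Wᴴ * M * W) *ᵥ z := by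
    rw [star_mulVec, ← dotProduct_mulVec, mulVec_mulVec, mulVec_mulVec, Matrix.mul_assoc]
  have hpos : 0 < (star z ⬝ᵥ z).re :=
    (Complex.pos_iff.mp (dotProduct_star_self_pos_iff.mpr hz0)).1
  refine le_of_mul_le_mul_right ?_ hpos
  calc eigDesc M ⟨m - 2, _⟩ * (star z ⬝ᵥ z).re
      ≤ (star z ⬝ᵥ (Wᴴ * M * W) *ᵥ z).re := hnorm ▸ hquad ▸ hw _ hWz
    _ ≤ (Wᴴ * M * W).trace.re * (star z ⬝ᵥ z).re :=
      (hM.conjTranspose_mul_mul_same W).re_star_dotProduct_mulVec_le_trace z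

theorem Matrix.IsHermitian.eigDesc_last_add_le {A B : Matrix (Fin m) (Fin m) ℂ}
    (hA : A.IsHermitian) (hB : B.IsHermitian) (hm : 0 < m) :
    eigDesc A ⟨m - 1, Nat.sub_lt hm Nat.one_pos⟩ +
        eigDesc B ⟨m - 1, Nat.sub_lt hm Nat.one_pos⟩ ≤
      eigDesc (A + B) ⟨m - 1, Nat.sub_lt hm Nat.one_pos⟩ := by
  obtain ⟨w, hw, hABw⟩ := (hA.add hB).exists_eigDesc_last hm
  have hAw := hA.eigDesc_last_mul_le hm w
  have hBw := hB.eigDesc_last_mul_le hm w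
  rw [hw, Complex.one_re, mul_one] at hAw hBw
  rw [← Complex.ofReal_re (eigDesc (A + B) _), ← hABw, add_mulVec, dotProduct_add,
    Complex.add_re]
  exact add_le_add hAw hBw

end eigDesc

theorem eigDesc_blockR_sub_two_le {n : ℕ} (hn : 0 < n) {A B X : Matrix (Fin n) (Fin n) ℂ}
    (hP : (fromBlocks A X Xᴴ B).PosSemidef) {u v : Fin n → ℂ} (hu : star u ⬝ᵥ u = 1)
    (hv : star v ⬝ᵥ v = 1) :
    eigDesc (blockR A X B) ⟨n + n - 2, Nat.sub_lt (Nat.add_pos_left hn n) two_pos⟩ ≤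
      (star u ⬝ᵥ A *ᵥ u + star v ⬝ᵥ B *ᵥ v).re := by
  set e : Fin (n + n) ≃ Fin n ⊕ Fin n := finSumFinEquiv.symm
  set W := (blockColumns u v).submatrix e id
  have hW : Wᴴ * W = 1 := by
    rw [conjTranspose_submatrix, submatrix_mul_equiv, blockColumns_conjTranspose_mul_self hu hv,
      submatrix_id_id]
  have h := (hP.submatrix e).eigDesc_sub_two_le_re_trace (by omega) (by simp) W hW
  rwa [conjTranspose_submatrix, submatrix_mul_equiv, submatrix_mul_equiv, submatrix_id_id,
    trace_blockColumns_conjTranspose_mul_fromBlocks_mul] at h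

/-- For a positive semidefinite block matrix, the smallest eigenvalue is
nonnegative and `λ_{2n-1}([[A,X],[Xᴴ,B]]) ≤ λ_n(A) + λ_n(B) ≤ λ_n(A + B)`. -/
theorem stmt5 {n : ℕ} (hn : 0 < n) (A B X : Matrix (Fin n) (Fin n) ℂ)
    (hP : (Matrix.fromBlocks A X Xᴴ B).PosSemidef) :
    0 ≤ eigDesc (blockR A X B) ⟨n + n - 1, by omega⟩ ∧
    eigDesc (blockR A X B) ⟨n + n - 2, by omega⟩ ≤
      eigDesc A ⟨n - 1, by omega⟩ + eigDesc B ⟨n - 1, by omega⟩ ∧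
    eigDesc A ⟨n - 1, by omega⟩ + eigDesc B ⟨n - 1, by omega⟩ ≤
      eigDesc (A + B) ⟨n - 1, by omega⟩ := by
  have hA : A.PosSemidef := hP.submatrix Sum.inl
  have hB : B.PosSemidef := hP.submatrix Sum.inr
  obtain ⟨u, hu, hAu⟩ := hA.1.exists_eigDesc_last hn
  obtain ⟨v, hv, hBv⟩ := hB.1.exists_eigDesc_last hn
  refine ⟨(hP.submatrix _).eigDesc_nonneg _, ?_, hA.1.eigDesc_last_add_le hB.1 hn⟩
  simpa [hAu, hBv] using eigDesc_blockR_sub_two_le hn hP hu hv
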